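/- arXiv:2012.05751 — 3 statements merged into one kernel-verified Lean document; each statement's English description precedes it below -/
import Mathlib

section
/- Let {A_k} be a sequence of convex bodies in ℝⁿ with λₙ(A_k) → ∞ and W_{n−1}(A_k) = O(λₙ(A_k)^{1/n}), and suppose additionally W_{n−j}(A_k) ≤ c_j · W_{n−1}(A_k)^{j} for constants c_j (0 ≤ j ≤ n). Fix L > 0 and let C_k ⊆ A_k + √n·L·B₁(0) be convex bodies containing A_k. Then |λₙ(C_k) − λₙ(A_k)| = O(λₙ(A_k)^{(n−1)/n}) and consequently λₙ(C_k)/λₙ(A_k) → 1 as k → ∞. -/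
open MeasureTheory Filter
open scoped Pointwise

/-!
Since `A k ⊆ Ck k ⊆ A k + δ • B` with `δ = √n L`, the volume gap is at most the Steiner polynomial
`∑ binom(n,i) W_i δ^i`. The Aleksandrov–Fenchel bounds give `W_i ≤ c_{n-i} W_{n-1}^{n-i}`, and with
`W_{n-1} = O(V^{1/n})`, `i ≥ 1` and `V ≥ 1` every term is `O(V^{(n-1)/n})`, which is `o(V)`.
-/

theorem abs_measureReal_sub_le_of_subset {α : Type*} [MeasurableSpace α] {μ : Measure α}
    {s t u : Set α} (hst : s ⊆ t) (htu : t ⊆ u) (hu : μ u ≠ ⊤) :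
    |μ.real t - μ.real s| ≤ μ.real u - μ.real s := by
  have ht : μ t ≠ ⊤ := measure_ne_top_of_subset htu hu
  rw [abs_of_nonneg (sub_nonneg.2 (measureReal_mono hst ht))]
  linarith [measureReal_mono htu hu]

theorem pow_le_mul_rpow_of_le_mul_rpow_inv {w M v : ℝ} {n j : ℕ} (hw : 0 ≤ w) (hv : 1 ≤ v)
    (hwM : w ≤ M * v ^ ((1 : ℝ) / n)) (hj : j + 1 ≤ n) :
    w ^ j ≤ max M 0 ^ j * v ^ (((n : ℝ) - 1) / n) := by
  have hn : (0 : ℝ) < n := by exact_mod_cast (show 0 < n by omega)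
  have hexp : (1 : ℝ) / n * j ≤ ((n : ℝ) - 1) / n := by
    rw [div_mul_eq_mul_div, one_mul]
    gcongr
    exact le_sub_iff_add_le.2 (by exact_mod_cast hj)
  calc w ^ j ≤ (max M 0 * v ^ ((1 : ℝ) / n)) ^ j :=
        pow_le_pow_left₀ hw (hwM.trans (by gcongr; exact le_max_left _ _)) _
    _ = max M 0 ^ j * v ^ ((1 : ℝ) / n * j) := by
        rw [mul_pow, Real.rpow_mul (by linarith), Real.rpow_natCast]
    _ ≤ max M 0 ^ j * v ^ (((n : ℝ) - 1) / n) := by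
        gcongr

section Quermassintegrals

variable {n : ℕ} {W c : ℕ → ℝ} {M v : ℝ}

theorem le_mul_rpow_of_aleksandrovFenchel (hW : ∀ i, 0 ≤ W i) (hv : 1 ≤ v)
    (hM : W (n - 1) ≤ M * v ^ ((1 : ℝ) / n))
    (hc : ∀ j ≤ n, W (n - j) ≤ c j * W (n - 1) ^ j) {i : ℕ} (hi : i ∈ Finset.Icc 1 n) :
    W i ≤ max (c (n - i)) 0 * max M 0 ^ (n - i) * v ^ (((n : ℝ) - 1) / n) := by
  obtain ⟨hi1, hin⟩ := Finset.mem_Icc.1 hi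
  calc W i = W (n - (n - i)) := by rw [Nat.sub_sub_self hin]
    _ ≤ c (n - i) * W (n - 1) ^ (n - i) := hc _ (Nat.sub_le _ _)
    _ ≤ max (c (n - i)) 0 * W (n - 1) ^ (n - i) := by
        gcongr
        · exact pow_nonneg (hW _) _
        · exact le_max_left (c (n - i)) 0
    _ ≤ max (c (n - i)) 0 * (max M 0 ^ (n - i) * v ^ (((n : ℝ) - 1) / n)) := by
        gcongr
        exact pow_le_mul_rpow_of_le_mul_rpow_inv (hW _) hv hM (by omega)
    _ = _ := (mul_assoc _ _ _).symm

theorem sum_choose_mul_pow_le_mul_rpow (hW : ∀ i, 0 ≤ W i) (hv : 1 ≤ v)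
    (hM : W (n - 1) ≤ M * v ^ ((1 : ℝ) / n))
    (hc : ∀ j ≤ n, W (n - j) ≤ c j * W (n - 1) ^ j) {δ : ℝ} (hδ : 0 ≤ δ) :
    ∑ i ∈ Finset.Icc 1 n, (n.choose i : ℝ) * W i * δ ^ i ≤
      (∑ i ∈ Finset.Icc 1 n, (n.choose i : ℝ) * (max (c (n - i)) 0 * max M 0 ^ (n - i)) * δ ^ i) *
        v ^ (((n : ℝ) - 1) / n) := by
  rw [Finset.sum_mul]
  refine Finset.sum_le_sum fun i hi => ?_
  calc (n.choose i : ℝ) * W i * δ ^ i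
      ≤ n.choose i * (max (c (n - i)) 0 * max M 0 ^ (n - i) * v ^ (((n : ℝ) - 1) / n)) * δ ^ i := by
        gcongr
        exact le_mul_rpow_of_aleksandrovFenchel hW hv hM hc hi
    _ = _ := by ring

end Quermassintegrals

theorem tendsto_div_nhds_one_of_abs_sub_le_rpow {ι : Type*} {l : Filter ι} {f g : ι → ℝ}
    {K p : ℝ} (hp : p < 1) (hf : Tendsto f l atTop)
    (hfg : ∀ᶠ k in l, |g k - f k| ≤ K * f k ^ p) :
    Tendsto (fun k => g k / f k) l (nhds 1) := by
  rw [tendsto_iff_norm_sub_tendsto_zero]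
  have hdecay : Tendsto (fun k => K * f k ^ (p - 1)) l (nhds 0) := by
    simpa [neg_sub] using ((tendsto_rpow_neg_atTop (sub_pos.2 hp)).comp hf).const_mul K
  refine squeeze_zero' (Eventually.of_forall fun k => norm_nonneg _) ?_ hdecay
  filter_upwards [hfg, hf.eventually_gt_atTop 0] with k hk hpos
  calc ‖g k / f k - 1‖ = |g k - f k| / f k := by
        rw [Real.norm_eq_abs, div_sub_one hpos.ne', abs_div, abs_of_pos hpos]
    _ ≤ K * f k ^ p / f k := by gcongr
    _ = K * f k ^ (p - 1) := by rw [Real.rpow_sub_one hpos.ne', mul_div_assoc]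

theorem stmt9_general (n : ℕ) (hn : 1 ≤ n)
    (A Ck : ℕ → Set (EuclideanSpace ℝ (Fin n)))
    (W : ℕ → ℕ → ℝ)
    (hAcomp : ∀ k, IsCompact (A k))
    (hWnonneg : ∀ i k, 0 ≤ W i k)
    (hSteiner : ∀ k, ∀ δ : ℝ, 0 ≤ δ →
      (volume (A k + δ • Metric.closedBall (0 : EuclideanSpace ℝ (Fin n)) 1)).toReal
        ≤ (volume (A k)).toReal + ∑ i ∈ Finset.Icc 1 n, (n.choose i : ℝ) * W i k * δ ^ i)
    (hvol : Tendsto (fun k => (volume (A k)).toReal) atTop atTop)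
    (hW : ∃ M : ℝ, ∀ k, W (n - 1) k ≤ M * (volume (A k)).toReal ^ ((1 : ℝ) / n))
    (hAF : ∃ c : ℕ → ℝ, ∀ j ≤ n, ∀ k, W (n - j) k ≤ c j * (W (n - 1) k) ^ j)
    (L : ℝ) (hL : 0 < L)
    (hCk : ∀ k, A k ⊆ Ck k ∧
      Ck k ⊆ A k + (Real.sqrt n * L) • Metric.closedBall (0 : EuclideanSpace ℝ (Fin n)) 1) :
    (∃ K : ℝ, ∀ᶠ k in atTop,
      |(volume (Ck k)).toReal - (volume (A k)).toReal|
        ≤ K * (volume (A k)).toReal ^ (((n : ℝ) - 1) / n)) ∧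
    Tendsto (fun k => (volume (Ck k)).toReal / (volume (A k)).toReal) atTop (nhds 1) := by
  obtain ⟨M, hM⟩ := hW
  obtain ⟨c, hc⟩ := hAF
  set δ := Real.sqrt n * L
  have hδ : 0 ≤ δ := by positivity
  set K := ∑ i ∈ Finset.Icc 1 n, (n.choose i : ℝ) * (max (c (n - i)) 0 * max M 0 ^ (n - i)) * δ ^ i
  have hbound : ∀ᶠ k in atTop, |volume.real (Ck k) - volume.real (A k)|
      ≤ K * volume.real (A k) ^ (((n : ℝ) - 1) / n) := by
    filter_upwards [hvol.eventually_ge_atTop 1] with k hk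
    have hfin : volume (A k + δ • Metric.closedBall 0 1) ≠ ⊤ :=
      ((hAcomp k).add ((isCompact_closedBall 0 1).smul δ)).measure_lt_top.ne
    calc |volume.real (Ck k) - volume.real (A k)|
        ≤ volume.real (A k + δ • Metric.closedBall 0 1) - volume.real (A k) :=
          abs_measureReal_sub_le_of_subset (hCk k).1 (hCk k).2 hfin
      _ ≤ ∑ i ∈ Finset.Icc 1 n, (n.choose i : ℝ) * W i k * δ ^ i :=
          sub_le_iff_le_add'.2 (hSteiner k δ hδ)
      _ ≤ K * volume.real (A k) ^ (((n : ℝ) - 1) / n) :=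
          sum_choose_mul_pow_le_mul_rpow (fun i => hWnonneg i k) hk (hM k)
            (fun j hj => hc j hj k) hδ
  have hexp : ((n : ℝ) - 1) / n < 1 := by
    rw [div_lt_one (by exact_mod_cast hn)]
    linarith
  exact ⟨⟨K, hbound⟩, tendsto_div_nhds_one_of_abs_sub_le_rpow hexp hvol hbound⟩

/-- Volume comparison along a convex averaging sequence: if the convex bodies `A k` have
volume tending to infinity, quermassintegrals `W i k` satisfying a Steiner-type bound,
`W_{n-1}(A_k) = O(λₙ(A_k)^{1/n})` and the Aleksandrov–Fenchel-type bounds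
`W_{n-j}(A_k) ≤ c_j W_{n-1}(A_k)^j`, and `A k ⊆ C k ⊆ A k + √n·L·B₁(0)`, then
`|λₙ(C_k) − λₙ(A_k)| = O(λₙ(A_k)^{(n-1)/n})` and `λₙ(C_k)/λₙ(A_k) → 1`. -/
theorem stmt9 (n : ℕ) (hn : 1 ≤ n)
    (A Ck : ℕ → Set (EuclideanSpace ℝ (Fin n)))
    (W : ℕ → ℕ → ℝ)
    (hAconv : ∀ k, Convex ℝ (A k)) (hAcomp : ∀ k, IsCompact (A k))
    (hAne : ∀ k, (A k).Nonempty)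
    (hWnonneg : ∀ i k, 0 ≤ W i k)
    (hSteiner : ∀ k, ∀ δ : ℝ, 0 ≤ δ →
      (volume (A k + δ • Metric.closedBall (0 : EuclideanSpace ℝ (Fin n)) 1)).toReal
        ≤ (volume (A k)).toReal + ∑ i ∈ Finset.Icc 1 n, (n.choose i : ℝ) * W i k * δ ^ i)
    (hvol : Tendsto (fun k => (volume (A k)).toReal) atTop atTop)
    (hW : ∃ M : ℝ, ∀ k, W (n - 1) k ≤ M * (volume (A k)).toReal ^ ((1 : ℝ) / n))
    (hAF : ∃ c : ℕ → ℝ, ∀ j ≤ n, ∀ k, W (n - j) k ≤ c j * (W (n - 1) k) ^ j)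
    (L : ℝ) (hL : 0 < L)
    (hCk : ∀ k, A k ⊆ Ck k ∧
      Ck k ⊆ A k + (Real.sqrt n * L) • Metric.closedBall (0 : EuclideanSpace ℝ (Fin n)) 1) :
    (∃ K : ℝ, ∀ᶠ k in atTop,
      |(volume (Ck k)).toReal - (volume (A k)).toReal|
        ≤ K * (volume (A k)).toReal ^ (((n : ℝ) - 1) / n)) ∧
    Tendsto (fun k => (volume (Ck k)).toReal / (volume (A k)).toReal) atTop (nhds 1) :=
  stmt9_general n hn A Ck W hAcomp hWnonneg hSteiner hvol hW hAF L hL hCk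
end

section
/- Let F be a functional summary into functions on a compact metric space T, uniformly bounded (sup_{f∈im F} sup_{s∈T} |f(s)| ≤ U < ∞) with equicontinuous image, and let D₁, D₂, … be persistence diagrams sampled i.i.d. from a probability measure on the space of diagrams. Set f_i := F(D_i). Then almost surely sup_{s∈T} | (1/m) ∑_{i=1}^m f_i(s) − E[F(D)(s)] | → 0 as m → ∞. -/
/-!
For each fixed `s` the real strong law of large numbers gives almost sure convergence of the
averages `(1/m) ∑ F(Dᵢ)(s)`; intersecting over a countable dense set of points leaves a single
null set. Off it, the averages form an equicontinuous family (each is a convex combination of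
members of `F`) and the mean `s ↦ E[F(D)(s)]` is continuous, so convergence on a dense set
propagates to every point, and on a compact space pointwise convergence of an equicontinuous
family is uniform (Arzelà–Ascoli).
-/

open MeasureTheory Filter Topology ProbabilityTheory Finset

theorem dist_average_average_le {ι E : Type*} [SeminormedAddCommGroup E] [NormedSpace ℝ E]
    (s : Finset ι) {a b : ι → E} {ε : ℝ} (hε : 0 ≤ ε) (hab : ∀ i ∈ s, dist (a i) (b i) ≤ ε) :
    dist ((#s : ℝ)⁻¹ • ∑ i ∈ s, a i) ((#s : ℝ)⁻¹ • ∑ i ∈ s, b i) ≤ ε := by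
  rcases s.eq_empty_or_nonempty with rfl | hs
  · simpa using hε
  have hcard : (0 : ℝ) < #s := by exact_mod_cast hs.card_pos
  rw [dist_smul₀, Real.norm_of_nonneg (inv_nonneg.2 hcard.le), inv_mul_le_iff₀ hcard]
  simpa [mul_comm] using dist_sum_sum_le_of_le s hab

theorem Equicontinuous.average {ι X E : Type*} [TopologicalSpace X] [SeminormedAddCommGroup E]
    [NormedSpace ℝ E] {F : ι → X → E} (hF : Equicontinuous F) (v : ℕ → ι) :
    Equicontinuous fun (m : ℕ) (x : X) => (m : ℝ)⁻¹ • ∑ i ∈ range m, F (v i) x := by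
  intro x₀
  rw [Metric.equicontinuousAt_iff_right]
  intro ε hε
  filter_upwards [Metric.equicontinuousAt_iff_right.1 (hF x₀) (ε / 2) (half_pos hε)] with x hx m
  have h := dist_average_average_le (range m) (half_pos hε).le fun i _ => (hx (v i)).le
  rw [card_range] at h
  linarith

theorem Equicontinuous.tendstoUniformly_of_tendsto_of_dense {ι X α : Type*}
    [TopologicalSpace X] [CompactSpace X] [UniformSpace α] {F : ι → X → α} {f : X → α}
    {l : Filter ι} {s : Set X} (hF : Equicontinuous F) (hf : Continuous f) (hs : Dense s)
    (hconv : ∀ x ∈ s, Tendsto (F · x) l (𝓝 (f x))) :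
    TendstoUniformly F f l := by
  have hpointwise : ∀ x, Tendsto (F · x) l (𝓝 (f x)) := fun x =>
    (hF.isClosed_setOfPred_tendsto hf).closure_subset_iff.2 hconv (hs.closure_eq ▸ Set.mem_univ x)
  exact UniformFun.tendsto_iff_tendstoUniformly.1
    ((hF.tendsto_uniformFun_iff_pi l f).2 (tendsto_pi_nhds.2 hpointwise))

theorem TendstoUniformly.tendsto_iSup_abs_sub {ι X : Type*} {F : ι → X → ℝ} {f : X → ℝ}
    {l : Filter ι} (h : TendstoUniformly F f l) :
    Tendsto (fun i => ⨆ x, |F i x - f x|) l (𝓝 0) := by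
  rw [Metric.tendsto_nhds]
  intro ε hε
  filter_upwards [Metric.tendstoUniformly_iff.1 h (ε / 2) (half_pos hε)] with i hi
  have hsup : ⨆ x, |F i x - f x| ≤ ε / 2 :=
    Real.iSup_le (fun x => by rw [← Real.dist_eq, dist_comm]; exact (hi x).le) (half_pos hε).le
  rw [Real.dist_0_eq_abs, abs_of_nonneg (Real.iSup_nonneg fun x => abs_nonneg _)]
  linarith

theorem ae_tendsto_average_comp {Ω 𝒟 E : Type*} [MeasurableSpace Ω] [MeasurableSpace 𝒟]
    [NormedAddCommGroup E] [NormedSpace ℝ E] [CompleteSpace E] [MeasurableSpace E] [BorelSpace E]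
    [SecondCountableTopology E]
    {P : Measure Ω} {Q : Measure 𝒟} {D : ℕ → Ω → 𝒟} (hDmeas : ∀ i, Measurable (D i))
    (hlaw : ∀ i, P.map (D i) = Q) (hindep : iIndepFun D P) {φ : 𝒟 → E} (hφ : Measurable φ)
    (hint : Integrable φ Q) :
    ∀ᵐ ω ∂P, Tendsto (fun m : ℕ => (m : ℝ)⁻¹ • ∑ i ∈ range m, φ (D i ω)) atTop
      (𝓝 (∫ d, φ d ∂Q)) := by
  have hident : ∀ i, IdentDistrib (φ ∘ D i) (φ ∘ D 0) P P := fun i =>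
    IdentDistrib.comp ⟨(hDmeas i).aemeasurable, (hDmeas 0).aemeasurable, by rw [hlaw i, hlaw 0]⟩ hφ
  have hmean : ∫ ω, φ (D 0 ω) ∂P = ∫ d, φ d ∂Q := by
    rw [← hlaw 0, integral_map (hDmeas 0).aemeasurable hφ.aestronglyMeasurable]
  have hint₀ : Integrable (φ ∘ D 0) P :=
    (integrable_map_measure hφ.aestronglyMeasurable (hDmeas 0).aemeasurable).1 (hlaw 0 ▸ hint)
  have h := strong_law_ae (fun i => φ ∘ D i) hint₀
    (fun i j hij => (hindep.indepFun hij).comp hφ hφ) hident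
  simpa only [Function.comp_apply, hmean] using h

theorem stmt17_general {𝒟 : Type*} [MeasurableSpace 𝒟]
    {T : Type*} [MetricSpace T] [CompactSpace T]
    {Ω : Type*} [MeasurableSpace Ω] (P : Measure Ω)
    (Q : Measure 𝒟) [IsProbabilityMeasure Q]
    (F : 𝒟 → T → ℝ) (U : ℝ)
    (hbound : ∀ d s, |F d s| ≤ U)
    (hequi : Equicontinuous F)
    (hFmeas : ∀ s : T, Measurable fun d => F d s)
    (D : ℕ → Ω → 𝒟) (hDmeas : ∀ i, Measurable (D i))
    (hlaw : ∀ i, Measure.map (D i) P = Q)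
    (hindep : ProbabilityTheory.iIndepFun (m := fun _ : ℕ => ‹MeasurableSpace 𝒟›) D P) :
    ∀ᵐ ω ∂P, Tendsto
      (fun m : ℕ => ⨆ s : T,
        |(1 / (m : ℝ)) * ∑ i ∈ Finset.range m, F (D i ω) s - ∫ d, F d s ∂Q|)
      atTop (nhds 0) := by
  have hint : ∀ s, Integrable (fun d => F d s) Q := fun s =>
    .of_bound (hFmeas s).aestronglyMeasurable U (ae_of_all _ fun d => hbound d s)
  have hmean : Continuous fun s => ∫ d, F d s ∂Q :=
    continuous_of_dominated (fun s => (hFmeas s).aestronglyMeasurable)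
      (fun s => ae_of_all _ fun d => hbound d s) (integrable_const U)
      (ae_of_all _ hequi.continuous)
  obtain ⟨S, hScount, hSdense⟩ := TopologicalSpace.exists_countable_dense T
  have hslln : ∀ᵐ ω ∂P, ∀ s ∈ S, Tendsto (fun m : ℕ => (m : ℝ)⁻¹ • ∑ i ∈ range m, F (D i ω) s)
      atTop (𝓝 (∫ d, F d s ∂Q)) :=
    (ae_ball_iff hScount).2 fun s _ =>
      ae_tendsto_average_comp hDmeas hlaw hindep (hFmeas s) (hint s)
  filter_upwards [hslln] with ω hω
  have hunif :=
    (hequi.average fun i => D i ω).tendstoUniformly_of_tendsto_of_dense hmean hSdense hω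
  simpa only [smul_eq_mul, one_div] using hunif.tendsto_iSup_abs_sub

/-- Uniform strong law of large numbers for functional summaries: if `F` is uniformly
bounded with equicontinuous image and `D₁, D₂, …` are i.i.d. random persistence diagrams
with law `Q`, then almost surely
`sup_{s∈T} |(1/m) ∑_{i<m} F(D_i)(s) − E[F(D)(s)]| → 0`. -/
theorem stmt17 {𝒟 : Type*} [MeasurableSpace 𝒟]
    {T : Type*} [MetricSpace T] [CompactSpace T] [Nonempty T]
    {Ω : Type*} [MeasurableSpace Ω] (P : Measure Ω) [IsProbabilityMeasure P]
    (Q : Measure 𝒟) [IsProbabilityMeasure Q]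
    (F : 𝒟 → T → ℝ) (U : ℝ)
    (hbound : ∀ d s, |F d s| ≤ U)
    (hequi : Equicontinuous F)
    (hFmeas : ∀ s : T, Measurable fun d => F d s)
    (D : ℕ → Ω → 𝒟) (hDmeas : ∀ i, Measurable (D i))
    (hlaw : ∀ i, Measure.map (D i) P = Q)
    (hindep : ProbabilityTheory.iIndepFun (m := fun _ : ℕ => ‹MeasurableSpace 𝒟›) D P) :
    ∀ᵐ ω ∂P, Tendsto
      (fun m : ℕ => ⨆ s : T,
        |(1 / (m : ℝ)) * ∑ i ∈ Finset.range m, F (D i ω) s - ∫ d, F d s ∂Q|)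
      atTop (nhds 0) :=
  stmt17_general P Q F U hbound hequi hFmeas D hDmeas hlaw hindep
end

section
/- Let η₁, η₂ ∈ ℝ with η₂ ≠ n·η₁, let C > 0, and suppose positive reals N(t), D(t), L(t) for t in an interval (T₀,T₁) ⊆ (0,∞) satisfy, for all t,t' ∈ (T₀,T₁): N(t) = (t/t')^{-η₂} N(t'), D(t) = (t/t')^{η₁} D(t'), L(t) = (t/t')^{η₁} L(t'), and the packing inequality N(t) ≤ C · D(t)^δ / L(t)^{n+δ} for a fixed δ > 0. If there exist t, t' ∈ (T₀,T₁) with t/t' > ( C · max{ D(t)^δ/(N(t) L(t)^{n+δ}), D(t')^δ/(N(t') L(t')^{n+δ}) } )^{1/|nη₁ − η₂|}, then a contradiction follows; hence under this extension hypothesis necessarily η₂ = n·η₁. -/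
private lemma stmt18_aux (r A B E a b e p q : ℝ) (hr : 0 < r)
    (hA : 0 < A) (hB : 0 < B) (hE : 0 < E) :
    (r ^ b * B) ^ p / ((r ^ a * A) * ((r ^ e * E) ^ q)) =
      r ^ (b * p - a - e * q) * (B ^ p / (A * E ^ q)) := by
  rw [Real.mul_rpow (Real.rpow_nonneg hr.le _) hB.le,
      Real.mul_rpow (Real.rpow_nonneg hr.le _) hE.le,
      ← Real.rpow_mul hr.le, ← Real.rpow_mul hr.le,
      Real.rpow_sub hr, Real.rpow_sub hr]
  have h1 : (0:ℝ) < r ^ (b * p) := Real.rpow_pos_of_pos hr _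
  have h2 : (0:ℝ) < r ^ a := Real.rpow_pos_of_pos hr _
  have h3 : (0:ℝ) < r ^ (e * q) := Real.rpow_pos_of_pos hr _
  have h4 : (0:ℝ) < B ^ p := Real.rpow_pos_of_pos hB _
  have h5 : (0:ℝ) < E ^ q := Real.rpow_pos_of_pos hE _
  field_simp

/-- Algebraic core of the packing relation: if `N, D, L > 0` scale self-similarly on
`(T₀,T₁)` with exponents `−η₂, η₁, η₁`, satisfy the packing inequality
`N(t) ≤ C D(t)^δ / L(t)^{n+δ}`, and `η₂ ≠ n η₁`, then the existence of `t, t' ∈ (T₀,T₁)`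
with `t/t'` exceeding the stated bound yields a contradiction (hence `η₂ = n η₁` whenever
the interval is sufficiently extended). -/
theorem stmt18 (n : ℕ) (η₁ η₂ C δ T₀ T₁ : ℝ)
    (hC : 0 < C) (hδ : 0 < δ) (hT₀ : 0 < T₀) (hT : T₀ < T₁)
    (N D L : ℝ → ℝ)
    (hNpos : ∀ t ∈ Set.Ioo T₀ T₁, 0 < N t)
    (hDpos : ∀ t ∈ Set.Ioo T₀ T₁, 0 < D t)
    (hLpos : ∀ t ∈ Set.Ioo T₀ T₁, 0 < L t)
    (hNs : ∀ t ∈ Set.Ioo T₀ T₁, ∀ t' ∈ Set.Ioo T₀ T₁, N t = (t / t') ^ (-η₂) * N t')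
    (hDs : ∀ t ∈ Set.Ioo T₀ T₁, ∀ t' ∈ Set.Ioo T₀ T₁, D t = (t / t') ^ η₁ * D t')
    (hLs : ∀ t ∈ Set.Ioo T₀ T₁, ∀ t' ∈ Set.Ioo T₀ T₁, L t = (t / t') ^ η₁ * L t')
    (hpack : ∀ t ∈ Set.Ioo T₀ T₁, N t ≤ C * (D t) ^ δ / (L t) ^ ((n : ℝ) + δ))
    (hne : η₂ ≠ (n : ℝ) * η₁)
    (hext : ∃ t ∈ Set.Ioo T₀ T₁, ∃ t' ∈ Set.Ioo T₀ T₁,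
      t / t' > (C * max ((D t) ^ δ / (N t * (L t) ^ ((n : ℝ) + δ)))
        ((D t') ^ δ / (N t' * (L t') ^ ((n : ℝ) + δ)))) ^ (1 / |(n : ℝ) * η₁ - η₂|)) :
    False := by
  obtain ⟨t, ht, t', ht', hr⟩ := hext
  have htp : 0 < t := lt_trans hT₀ ht.1
  have htp' : 0 < t' := lt_trans hT₀ ht'.1
  set r : ℝ := t / t' with hrdef
  have hr0 : 0 < r := div_pos htp htp'
  set α : ℝ := (n : ℝ) * η₁ - η₂ with hαdef
  have hα0 : α ≠ 0 := sub_ne_zero.mpr (fun h => hne h.symm)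
  have habs : 0 < |α| := abs_pos.mpr hα0
  set Qt : ℝ := (D t) ^ δ / (N t * (L t) ^ ((n : ℝ) + δ)) with hQt
  set Qt' : ℝ := (D t') ^ δ / (N t' * (L t') ^ ((n : ℝ) + δ)) with hQt'
  have hNt := hNpos t ht
  have hNt' := hNpos t' ht'
  have hDt := hDpos t ht
  have hDt' := hDpos t' ht'
  have hLt := hLpos t ht
  have hLt' := hLpos t' ht'
  -- packing at s implies 1 ≤ C * Q s
  have hp1 : 1 ≤ C * Qt := by
    have h := hpack t ht
    have hL : (0:ℝ) < (L t) ^ ((n : ℝ) + δ) := Real.rpow_pos_of_pos hLt _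
    rw [hQt, ← mul_div_assoc, le_div_iff₀ (by positivity), one_mul]
    calc N t * (L t) ^ ((n : ℝ) + δ)
        ≤ (C * (D t) ^ δ / (L t) ^ ((n : ℝ) + δ)) * (L t) ^ ((n : ℝ) + δ) :=
          mul_le_mul_of_nonneg_right h hL.le
      _ = C * (D t) ^ δ := by field_simp
  have hp1' : 1 ≤ C * Qt' := by
    have h := hpack t' ht'
    have hL : (0:ℝ) < (L t') ^ ((n : ℝ) + δ) := Real.rpow_pos_of_pos hLt' _
    rw [hQt', ← mul_div_assoc, le_div_iff₀ (by positivity), one_mul]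
    calc N t' * (L t') ^ ((n : ℝ) + δ)
        ≤ (C * (D t') ^ δ / (L t') ^ ((n : ℝ) + δ)) * (L t') ^ ((n : ℝ) + δ) :=
          mul_le_mul_of_nonneg_right h hL.le
      _ = C * (D t') ^ δ := by field_simp
  -- scaling: Qt = r ^ (-α) * Qt'
  have hQscale : Qt = r ^ (-α) * Qt' := by
    rw [hQt, hQt', hNs t ht t' ht', hDs t ht t' ht', hLs t ht t' ht', ← hrdef,
      stmt18_aux r (N t') (D t') (L t') (-η₂) η₁ η₁ δ ((n:ℝ) + δ) hr0 hNt' hDt' hLt']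
    congr 1
    rw [hαdef]
    ring_nf
  -- from hr : r > (C * max Qt Qt') ^ (1/|α|), deduce r ^ |α| > C * max Qt Qt'
  have hQtpos : 0 < Qt := by rw [hQt]; positivity
  have hQtpos' : 0 < Qt' := by rw [hQt']; positivity
  have hBpos : 0 < C * max Qt Qt' := mul_pos hC (lt_max_of_lt_left hQtpos)
  have hrabs : C * max Qt Qt' < r ^ |α| := by
    have h := Real.rpow_lt_rpow (Real.rpow_nonneg hBpos.le _) hr habs
    rwa [one_div, Real.rpow_inv_rpow hBpos.le (abs_ne_zero.mpr hα0)] at h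
  rcases lt_or_gt_of_ne hα0 with hneg | hpos
  · -- α < 0 : |α| = -α, Qt = r^(-α) Qt', so r^(-α) ≤ C*Qt ≤ C*max < r^(-α)
    rw [abs_of_neg hneg] at hrabs
    have h1 : C * Qt ≤ C * max Qt Qt' :=
      mul_le_mul_of_nonneg_left (le_max_left _ _) hC.le
    have h2 : r ^ (-α) ≤ C * Qt := by
      rw [hQscale, ← mul_assoc, mul_comm C, mul_assoc]
      nlinarith [Real.rpow_pos_of_pos hr0 (-α)]
    linarith
  · -- α > 0 : |α| = α, Qt' = r^α Qt
    rw [abs_of_pos hpos] at hrabs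
    have hQscale' : Qt' = r ^ α * Qt := by
      rw [hQscale, ← mul_assoc, ← Real.rpow_add hr0]
      simp
    have h1 : C * Qt' ≤ C * max Qt Qt' :=
      mul_le_mul_of_nonneg_left (le_max_right _ _) hC.le
    have h2 : r ^ α ≤ C * Qt' := by
      rw [hQscale', ← mul_assoc, mul_comm C, mul_assoc]
      nlinarith [Real.rpow_pos_of_pos hr0 α]
    linarith
end
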